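/- Let M₁ ∈ ℝ^{n₁×n₂} have rank r with r-th singular value σ_r(M₁) > 0. If L ∈ ℝ^{n₁×r}, R ∈ ℝ^{n₂×r} satisfy ‖LRᵀ − M₁‖_F ≤ σ_r(M₁)/2, then L and R have full column rank r and ‖L(LᵀL)⁻¹(RᵀR)⁻¹Rᵀ‖ ≤ 2/σ_r(M₁). -/

import Mathlib

/-!
A Weyl-type perturbation of the max–min characterisation of `σ := σ_r(M₁)` gives, for every
`c < σ / 2`, an `r`-dimensional subspace `V` with `c ‖x‖ ≤ ‖L Rᵀ x‖` on `V`. Injectivity of `L Rᵀ`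
on `V` forces both ranks to be `r`, and makes `Rᵀ` map `V` onto `ℝʳ`. Hence every `P u`, with
`P = L (LᵀL)⁻¹ (RᵀR)⁻¹ Rᵀ`, is `L Rᵀ x` for some `x ∈ V`, and
`‖P u‖² = ⟪x, (L Rᵀ)ᵀ P u⟫ = ⟪x, Π u⟫ ≤ ‖x‖ ‖u‖` for the orthogonal projection `Π = R (RᵀR)⁻¹ Rᵀ`;
so `c ‖P u‖ ≤ ‖u‖`, and letting `c → σ / 2` gives `‖P‖ ≤ 2 / σ`.
-/

open Matrix Finset

/-- Euclidean norm of a vector. -/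
noncomputable def enorm {ι : Type*} [Fintype ι] (x : ι → ℝ) : ℝ :=
  Real.sqrt (∑ i, x i ^ 2)

/-- Frobenius norm of a matrix. -/
noncomputable def frob {ι κ : Type*} [Fintype ι] [Fintype κ] (A : Matrix ι κ ℝ) : ℝ :=
  Real.sqrt (∑ i, ∑ j, A i j ^ 2)

/-- Matrix inner product ⟨A,B⟩ = Tr(AᵀB). -/
noncomputable def minner {ι κ : Type*} [Fintype ι] [Fintype κ] (A B : Matrix ι κ ℝ) : ℝ :=
  ∑ i, ∑ j, A i j * B i j

/-- The k-th largest singular value, via the Courant–Fischer max-min characterization. -/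
noncomputable def sval {ι κ : Type*} [Fintype ι] [Fintype κ] (A : Matrix ι κ ℝ) (k : ℕ) : ℝ :=
  sSup {t : ℝ | ∃ V : Submodule ℝ (κ → ℝ), Module.finrank ℝ V = k ∧
    ∀ x ∈ V, t * _root_.enorm x ≤ _root_.enorm (A.mulVec x)}

/-- Spectral (operator) norm = largest singular value. -/
noncomputable def spec {ι κ : Type*} [Fintype ι] [Fintype κ] (A : Matrix ι κ ℝ) : ℝ :=
  sval A 1

section EuclideanNorm

variable {ι κ : Type*} [Fintype ι] [Fintype κ]

lemma enorm_eq_norm_toLp (x : ι → ℝ) : _root_.enorm x = ‖WithLp.toLp 2 x‖ := by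
  simp [EuclideanSpace.norm_eq, _root_.enorm]

lemma enorm_nonneg (x : ι → ℝ) : 0 ≤ _root_.enorm x := Real.sqrt_nonneg _

lemma enorm_eq_zero_iff {x : ι → ℝ} : _root_.enorm x = 0 ↔ x = 0 := by
  simp [enorm_eq_norm_toLp]

lemma enorm_pos_of_ne_zero {x : ι → ℝ} (hx : x ≠ 0) : 0 < _root_.enorm x :=
  (enorm_nonneg x).lt_of_ne' (enorm_eq_zero_iff.not.mpr hx)

lemma enorm_sub_le_add (x y : ι → ℝ) :
    _root_.enorm (x - y) ≤ _root_.enorm x + _root_.enorm y := by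
  simpa [enorm_eq_norm_toLp] using norm_sub_le (WithLp.toLp 2 x) (WithLp.toLp 2 y)

lemma dotProduct_le_enorm_mul_enorm (x y : ι → ℝ) :
    x ⬝ᵥ y ≤ _root_.enorm x * _root_.enorm y := by
  simpa [enorm_eq_norm_toLp, EuclideanSpace.inner_toLp_toLp, dotProduct_comm] using
    real_inner_le_norm (WithLp.toLp 2 x) (WithLp.toLp 2 y)

lemma enorm_sq (x : ι → ℝ) : _root_.enorm x ^ 2 = x ⬝ᵥ x := by
  rw [_root_.enorm, Real.sq_sqrt (by positivity)]
  simp [dotProduct, sq]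

lemma enorm_mulVec_le_frob_mul (A : Matrix ι κ ℝ) (x : κ → ℝ) :
    _root_.enorm (A *ᵥ x) ≤ frob A * _root_.enorm x := by
  rw [_root_.enorm, frob, _root_.enorm, ← Real.sqrt_mul (by positivity), Finset.sum_mul]
  gcongr with i
  simpa [mulVec, dotProduct] using sum_mul_sq_le_sq_mul_sq univ (A i) x

lemma mulVec_dotProduct (A : Matrix ι κ ℝ) (x : κ → ℝ) (y : ι → ℝ) :
    A *ᵥ x ⬝ᵥ y = x ⬝ᵥ Aᵀ *ᵥ y := by
  rw [mulVec_transpose, dotProduct_comm x, ← dotProduct_mulVec, dotProduct_comm]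

lemma enorm_mulVec_le_of_symm_of_idem {Q : Matrix ι ι ℝ} (hsymm : Qᵀ = Q) (hidem : Q * Q = Q)
    (u : ι → ℝ) : _root_.enorm (Q *ᵥ u) ≤ _root_.enorm u := by
  have h : _root_.enorm (Q *ᵥ u) ^ 2 ≤ _root_.enorm u * _root_.enorm (Q *ᵥ u) :=
    calc _root_.enorm (Q *ᵥ u) ^ 2 = u ⬝ᵥ Qᵀ *ᵥ Q *ᵥ u := by rw [enorm_sq, mulVec_dotProduct]
      _ = u ⬝ᵥ Q *ᵥ u := by rw [hsymm, mulVec_mulVec, hidem]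
      _ ≤ _root_.enorm u * _root_.enorm (Q *ᵥ u) := dotProduct_le_enorm_mul_enorm _ _
  nlinarith [enorm_nonneg u, enorm_nonneg (Q *ᵥ u)]

end EuclideanNorm

section Rank

variable {m n K : Type*} [Fintype n] [Field K]

lemma isUnit_det_of_rank_eq_card [DecidableEq n] {A : Matrix n n K}
    (h : A.rank = Fintype.card n) : IsUnit A.det := by
  have hrange : LinearMap.range A.mulVecLin = ⊤ :=
    Submodule.eq_top_of_finrank_eq (by rw [← rank, h, Module.finrank_fintype_fun_eq_card])
  rw [← isUnit_iff_isUnit_det, ← mulVec_surjective_iff_isUnit]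
  exact LinearMap.range_eq_top.mp hrange

lemma isUnit_det_transpose_mul_self [Fintype m] [DecidableEq n] [LinearOrder K]
    [IsStrictOrderedRing K] {A : Matrix m n K}
    (h : A.rank = Fintype.card n) : IsUnit (Aᵀ * A).det :=
  isUnit_det_of_rank_eq_card (by rw [rank_transpose_mul_self, h])

lemma finrank_le_rank_of_injOn {A : Matrix m n K} {V : Submodule K (n → K)}
    (hinj : ∀ x ∈ V, A *ᵥ x = 0 → x = 0) : Module.finrank K V ≤ A.rank := by
  have hker : LinearMap.ker (A.mulVecLin.comp V.subtype) = ⊥ :=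
    LinearMap.ker_eq_bot'.mpr fun x hx => Subtype.ext (hinj x x.2 hx)
  calc Module.finrank K V = Module.finrank K (LinearMap.range (A.mulVecLin.comp V.subtype)) :=
        (LinearMap.finrank_range_of_inj (LinearMap.ker_eq_bot.mp hker)).symm
    _ ≤ A.rank := Submodule.finrank_mono (LinearMap.range_comp_le_range _ _)

lemma exists_mem_mulVec_eq_of_injOn [Fintype m] {B : Matrix m n K} {V : Submodule K (n → K)}
    (hV : Module.finrank K V = Fintype.card m) (hinj : ∀ x ∈ V, B *ᵥ x = 0 → x = 0)
    (w : m → K) : ∃ x ∈ V, B *ᵥ x = w := by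
  have hsurj : Function.Surjective (B.mulVecLin.comp V.subtype) := by
    refine (LinearMap.injective_iff_surjective_of_finrank_eq_finrank
      (by rw [hV, Module.finrank_fintype_fun_eq_card])).mp ?_
    exact LinearMap.ker_eq_bot.mp
      (LinearMap.ker_eq_bot'.mpr fun x hx => Subtype.ext (hinj x x.2 hx))
  obtain ⟨⟨x, hx⟩, hxw⟩ := hsurj w
  exact ⟨x, hx, hxw⟩

end Rank

section SingularValues

variable {ι κ : Type*} [Fintype ι] [Fintype κ]

lemma exists_subspace_of_lt_sval {M : Matrix ι κ ℝ} {k : ℕ} {s : ℝ} (hpos : 0 < sval M k)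
    (hs : s < sval M k) : ∃ V : Submodule ℝ (κ → ℝ), Module.finrank ℝ V = k ∧
      ∀ x ∈ V, s * _root_.enorm x ≤ _root_.enorm (M *ᵥ x) := by
  have hne : {t : ℝ | ∃ V : Submodule ℝ (κ → ℝ), Module.finrank ℝ V = k ∧
      ∀ x ∈ V, t * _root_.enorm x ≤ _root_.enorm (M *ᵥ x)}.Nonempty := by
    by_contra hempty
    rw [Set.not_nonempty_iff_eq_empty] at hempty
    simp [sval, hempty] at hpos
  obtain ⟨t, ⟨V, hV, hVt⟩, hst⟩ := exists_lt_of_lt_csSup hne hs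
  exact ⟨V, hV, fun x hx =>
    (mul_le_mul_of_nonneg_right hst.le (enorm_nonneg x)).trans (hVt x hx)⟩

/-- Weyl's inequality for the max-min characterization. -/
lemma exists_subspace_of_frob_sub_le {M A : Matrix ι κ ℝ} {k : ℕ} {s δ : ℝ}
    (hpos : 0 < sval M k) (hA : frob (A - M) ≤ δ) (hs : s + δ < sval M k) :
    ∃ V : Submodule ℝ (κ → ℝ), Module.finrank ℝ V = k ∧
      ∀ x ∈ V, s * _root_.enorm x ≤ _root_.enorm (A *ᵥ x) := by
  obtain ⟨V, hV, hVbelow⟩ := exists_subspace_of_lt_sval hpos hs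
  refine ⟨V, hV, fun x hx => ?_⟩
  have hM : _root_.enorm (M *ᵥ x) ≤ _root_.enorm (A *ᵥ x) + δ * _root_.enorm x :=
    calc _root_.enorm (M *ᵥ x) = _root_.enorm (A *ᵥ x - (A - M) *ᵥ x) := by
          rw [sub_mulVec, sub_sub_cancel]
      _ ≤ _root_.enorm (A *ᵥ x) + frob (A - M) * _root_.enorm x :=
          (enorm_sub_le_add _ _).trans (add_le_add_right (enorm_mulVec_le_frob_mul _ _) _)
      _ ≤ _root_.enorm (A *ᵥ x) + δ * _root_.enorm x := by gcongr; exact enorm_nonneg x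
  linarith [hVbelow x hx]

lemma sval_le_of_enorm_mulVec_le {P : Matrix ι κ ℝ} {k : ℕ} (hk : k ≠ 0) {C : ℝ} (hC : 0 ≤ C)
    (hP : ∀ u, _root_.enorm (P *ᵥ u) ≤ C * _root_.enorm u) : sval P k ≤ C := by
  refine Real.sSup_le ?_ hC
  rintro t ⟨W, hW, hWt⟩
  obtain ⟨x, hxW, hx⟩ : ∃ x ∈ W, x ≠ 0 :=
    Submodule.exists_mem_ne_zero_of_ne_bot fun hbot => hk (by rw [← hW, hbot, finrank_bot])
  exact le_of_mul_le_mul_right ((hWt x hxW).trans (hP x)) (enorm_pos_of_ne_zero hx)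

end SingularValues

section LowRankFactors

variable {m n r : Type*} [Fintype n] [Fintype r] {L : Matrix m r ℝ} {R : Matrix n r ℝ}
  {V : Submodule ℝ (n → ℝ)} {c : ℝ}

lemma injOn_of_bounded_below [Fintype m] (hc : 0 < c) {A : Matrix m n ℝ}
    (hV : ∀ x ∈ V, c * _root_.enorm x ≤ _root_.enorm (A *ᵥ x)) :
    ∀ x ∈ V, A *ᵥ x = 0 → x = 0 := by
  intro x hx hAx
  by_contra hne
  have hbound := hV x hx
  rw [hAx, enorm_eq_zero_iff.mpr rfl] at hbound
  exact (mul_pos hc (enorm_pos_of_ne_zero hne)).not_ge hbound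

lemma rank_eq_card_of_injOn_mul_transpose (hV : Module.finrank ℝ V = Fintype.card r)
    (hinj : ∀ x ∈ V, (L * Rᵀ) *ᵥ x = 0 → x = 0) :
    L.rank = Fintype.card r ∧ R.rank = Fintype.card r := by
  have hle := hV ▸ finrank_le_rank_of_injOn hinj
  exact ⟨le_antisymm L.rank_le_card_width (hle.trans (rank_mul_le_left L Rᵀ)),
    le_antisymm R.rank_le_card_width
      (hle.trans ((rank_mul_le_right L Rᵀ).trans_eq R.rank_transpose))⟩

lemma transpose_mul_gram_inv_eq_projection [Fintype m] [DecidableEq r]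
    (hL : IsUnit (Lᵀ * L).det) :
    (L * Rᵀ)ᵀ * (L * (Lᵀ * L)⁻¹ * (Rᵀ * R)⁻¹ * Rᵀ) = R * (Rᵀ * R)⁻¹ * Rᵀ := by
  rw [transpose_mul, transpose_transpose]
  calc R * Lᵀ * (L * (Lᵀ * L)⁻¹ * (Rᵀ * R)⁻¹ * Rᵀ)
      = R * ((Lᵀ * L) * (Lᵀ * L)⁻¹) * (Rᵀ * R)⁻¹ * Rᵀ := by simp only [Matrix.mul_assoc]
    _ = R * (Rᵀ * R)⁻¹ * Rᵀ := by rw [mul_nonsing_inv _ hL, Matrix.mul_one]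

lemma enorm_projection_mulVec_le [DecidableEq r] (hR : IsUnit (Rᵀ * R).det) (u : n → ℝ) :
    _root_.enorm ((R * (Rᵀ * R)⁻¹ * Rᵀ) *ᵥ u) ≤ _root_.enorm u := by
  refine enorm_mulVec_le_of_symm_of_idem ?_ ?_ u
  · simp only [transpose_mul, transpose_transpose, transpose_nonsing_inv, Matrix.mul_assoc]
  · calc R * (Rᵀ * R)⁻¹ * Rᵀ * (R * (Rᵀ * R)⁻¹ * Rᵀ)
        = R * ((Rᵀ * R)⁻¹ * (Rᵀ * R)) * (Rᵀ * R)⁻¹ * Rᵀ := by simp only [Matrix.mul_assoc]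
      _ = R * (Rᵀ * R)⁻¹ * Rᵀ := by rw [nonsing_inv_mul _ hR, Matrix.mul_one]

lemma enorm_mulVec_le_inv_of_bounded_below [Fintype m] [DecidableEq r]
    (hL : IsUnit (Lᵀ * L).det) (hR : IsUnit (Rᵀ * R).det)
    (hV : Module.finrank ℝ V = Fintype.card r) (hc : 0 < c)
    (hbelow : ∀ x ∈ V, c * _root_.enorm x ≤ _root_.enorm ((L * Rᵀ) *ᵥ x)) (u : n → ℝ) :
    _root_.enorm ((L * (Lᵀ * L)⁻¹ * (Rᵀ * R)⁻¹ * Rᵀ) *ᵥ u) ≤ c⁻¹ * _root_.enorm u := by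
  set P := L * (Lᵀ * L)⁻¹ * (Rᵀ * R)⁻¹ * Rᵀ with hP
  have hinj := injOn_of_bounded_below hc hbelow
  obtain ⟨x, hxV, hx⟩ := exists_mem_mulVec_eq_of_injOn (B := Rᵀ) hV
    (fun x hxV h => hinj x hxV (by rw [← mulVec_mulVec, h, mulVec_zero]))
    (((Lᵀ * L)⁻¹ * (Rᵀ * R)⁻¹ * Rᵀ) *ᵥ u)
  have hPu : P *ᵥ u = (L * Rᵀ) *ᵥ x := by
    rw [← mulVec_mulVec x L Rᵀ, hx, mulVec_mulVec, hP]
    simp only [Matrix.mul_assoc]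
  have hsq : _root_.enorm (P *ᵥ u) ^ 2 ≤ _root_.enorm x * _root_.enorm u :=
    calc _root_.enorm (P *ᵥ u) ^ 2 = (L * Rᵀ) *ᵥ x ⬝ᵥ P *ᵥ u := by rw [enorm_sq, hPu]
      _ = x ⬝ᵥ (R * (Rᵀ * R)⁻¹ * Rᵀ) *ᵥ u := by
        rw [mulVec_dotProduct, mulVec_mulVec, transpose_mul_gram_inv_eq_projection hL]
      _ ≤ _root_.enorm x * _root_.enorm u :=
        (dotProduct_le_enorm_mul_enorm _ _).trans
          (mul_le_mul_of_nonneg_left (enorm_projection_mulVec_le hR u) (enorm_nonneg x))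
  have hcx := hbelow x hxV
  rw [← hPu] at hcx
  rw [inv_mul_eq_div, le_div_iff₀ hc]
  rcases (enorm_nonneg (P *ᵥ u)).eq_or_lt with hzero | hpos
  · simpa [← hzero] using enorm_nonneg u
  · refine le_of_mul_le_mul_left ?_ hpos
    nlinarith [mul_le_mul_of_nonneg_right hcx (enorm_nonneg u),
      mul_le_mul_of_nonneg_left hsq hc.le]

end LowRankFactors

theorem stmt7_general (n₁ n₂ r : ℕ) (M₁ : Matrix (Fin n₁) (Fin n₂) ℝ)
    (hσ : 0 < sval M₁ r)
    (L : Matrix (Fin n₁) (Fin r) ℝ) (R : Matrix (Fin n₂) (Fin r) ℝ)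
    (hclose : frob (L * Rᵀ - M₁) ≤ sval M₁ r / 2) :
    L.rank = r ∧ R.rank = r ∧
    spec (L * (Lᵀ * L)⁻¹ * (Rᵀ * R)⁻¹ * Rᵀ) ≤ 2 / sval M₁ r := by
  set σ := sval M₁ r
  have hbelow (c : ℝ) (hc : c < σ / 2) : ∃ V : Submodule ℝ (Fin n₂ → ℝ),
      Module.finrank ℝ V = Fintype.card (Fin r) ∧
      ∀ x ∈ V, c * _root_.enorm x ≤ _root_.enorm ((L * Rᵀ) *ᵥ x) := by
    rw [Fintype.card_fin]
    exact exists_subspace_of_frob_sub_le hσ hclose (by linarith)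
  obtain ⟨V, hV, hVbelow⟩ := hbelow (σ / 4) (by linarith)
  obtain ⟨hL, hR⟩ := rank_eq_card_of_injOn_mul_transpose hV
    (injOn_of_bounded_below (by positivity) hVbelow)
  refine ⟨by simpa using hL, by simpa using hR, le_of_forall_gt_imp_ge_of_dense fun y hy => ?_⟩
  have hy0 : 0 < y := lt_trans (by positivity) hy
  obtain ⟨W, hW, hWbelow⟩ := hbelow y⁻¹ (by
    rwa [inv_lt_comm₀ hy0 (by positivity), inv_div])
  refine sval_le_of_enorm_mulVec_le one_ne_zero hy0.le fun u => ?_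
  simpa only [inv_inv] using enorm_mulVec_le_inv_of_bounded_below
    (isUnit_det_transpose_mul_self hL) (isUnit_det_transpose_mul_self hR) hW (inv_pos.mpr hy0)
    hWbelow u

/-- Stmt 7: if ‖LRᵀ − M₁‖_F ≤ σ_r(M₁)/2 with rank(M₁) = r, then L, R have full column
rank and ‖L(LᵀL)⁻¹(RᵀR)⁻¹Rᵀ‖ ≤ 2/σ_r(M₁). -/
theorem stmt7 (n₁ n₂ r : ℕ) (M₁ : Matrix (Fin n₁) (Fin n₂) ℝ)
    (hrank : M₁.rank = r) (hσ : 0 < sval M₁ r)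
    (L : Matrix (Fin n₁) (Fin r) ℝ) (R : Matrix (Fin n₂) (Fin r) ℝ)
    (hclose : frob (L * Rᵀ - M₁) ≤ sval M₁ r / 2) :
    L.rank = r ∧ R.rank = r ∧
    spec (L * (Lᵀ * L)⁻¹ * (Rᵀ * R)⁻¹ * Rᵀ) ≤ 2 / sval M₁ r :=
  stmt7_general n₁ n₂ r M₁ hσ L R hclose
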